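/- Let |ψ⟩ = Σ_i t_i |i⟩ be a pure singlet state in (ℂ^d)^{⊗n}. Then for each k ∈ {0, …, d−1} there exists a natural number N_k such that every multi-index l with t_l ≠ 0 contains the value k exactly N_k times. Consequently Σ_{k=0}^{d−1} N_k = n. -/

import Mathlib

/-!
Let `ζ` be a primitive `(n+1)`-st root of unity. The diagonal unitary that multiplies `|k⟩` by `ζ`
acts on the basis vector `|l⟩` by `ζ ^ m`, where `m ≤ n` is the number of occurrences of `k` in `l`.
Since `ψ` is an eigenvector of this unitary, `ζ ^ m` is the same eigenvalue for every `l` in the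
support of `ψ`, and because `m < n + 1` the exponent `m` itself is the same.
-/

open scoped BigOperators
open Finset

noncomputable def tensorAction {d n : ℕ} (U : Matrix (Fin d) (Fin d) ℂ)
    (t : (Fin n → Fin d) → ℂ) : (Fin n → Fin d) → ℂ :=
  fun i => ∑ j : Fin n → Fin d, (∏ α : Fin n, U (i α) (j α)) * t j

theorem Matrix.diagonal_mem_unitaryGroup {ι α : Type*} [DecidableEq ι] [Fintype ι] [CommRing α]
    [StarRing α] {f : ι → α} (hf : ∀ i, f i ∈ unitary α) :
    Matrix.diagonal f ∈ Matrix.unitaryGroup ι α := by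
  rw [Matrix.mem_unitaryGroup_iff', Matrix.star_eq_conjTranspose, Matrix.diagonal_conjTranspose,
    Matrix.diagonal_mul_diagonal, ← Matrix.diagonal_one]
  exact congrArg _ (funext fun i => Unitary.star_mul_self_of_mem (hf i))

theorem tensorAction_diagonal {d n : ℕ} (f : Fin d → ℂ) (t : (Fin n → Fin d) → ℂ)
    (l : Fin n → Fin d) :
    tensorAction (Matrix.diagonal f) t l = (∏ α, f (l α)) * t l := by
  rw [tensorAction, sum_eq_single l]
  · simp only [Matrix.diagonal_apply_eq]
  · intro j _ hj
    obtain ⟨α, hα⟩ := Function.ne_iff.mp hj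
    rw [prod_eq_zero (mem_univ α) (Matrix.diagonal_apply_ne f (Ne.symm hα)), zero_mul]
  · simp

theorem prod_mulSingle_comp {ι κ M : Type*} [Fintype ι] [DecidableEq κ] [CommMonoid M]
    (l : ι → κ) (k : κ) (z : M) :
    ∏ α, (Pi.mulSingle k z : κ → M) (l α) = z ^ #{α | l α = k} := by
  simp only [Pi.mulSingle_apply, prod_ite, prod_const, one_pow, mul_one]

theorem sum_card_filter_eq_card {ι κ : Type*} [Fintype ι] [Fintype κ] [DecidableEq κ]
    (l : ι → κ) : ∑ k, #{α | l α = k} = Fintype.card ι :=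
  (card_eq_sum_card_fiberwise fun α _ => mem_univ (l α)).symm

theorem Complex.mem_unitary_of_norm_eq_one {z : ℂ} (hz : ‖z‖ = 1) : z ∈ unitary ℂ := by
  rw [Unitary.mem_iff_star_mul_self, Complex.star_def, Complex.conj_mul', hz]
  norm_num

theorem card_filter_eq_of_eigenvector {d n : ℕ} {t : (Fin n → Fin d) → ℂ}
    (ht : ∀ U ∈ Matrix.unitaryGroup (Fin d) ℂ, ∃ c : ℂ, tensorAction U t = c • t)
    (k : Fin d) {l l' : Fin n → Fin d} (hl : t l ≠ 0) (hl' : t l' ≠ 0) :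
    #{α | l α = k} = #{α | l' α = k} := by
  have hζ := Complex.isPrimitiveRoot_exp (n + 1) n.succ_ne_zero
  set ζ := Complex.exp (2 * Real.pi * Complex.I / (n + 1 : ℕ))
  have hU : Matrix.diagonal (Pi.mulSingle k ζ) ∈ Matrix.unitaryGroup (Fin d) ℂ := by
    refine Matrix.diagonal_mem_unitaryGroup fun i => ?_
    rw [Pi.mulSingle_apply]
    split_ifs
    · exact Complex.mem_unitary_of_norm_eq_one (hζ.norm'_eq_one n.succ_ne_zero)
    · exact (unitary ℂ).one_mem
  obtain ⟨c, hc⟩ := ht _ hU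
  have eigenvalue : ∀ m : Fin n → Fin d, t m ≠ 0 → ζ ^ #{α | m α = k} = c := fun m hm =>
    mul_right_cancel₀ hm <| by
      simpa only [tensorAction_diagonal, prod_mulSingle_comp, Pi.smul_apply, smul_eq_mul]
        using congrFun hc m
  have card_lt : ∀ m : Fin n → Fin d, #{α | m α = k} < n + 1 := fun m =>
    Nat.lt_succ_of_le ((card_filter_le _ _).trans_eq (card_fin n))
  exact hζ.pow_inj (card_lt l) (card_lt l') ((eigenvalue l hl).trans (eigenvalue l' hl').symm)

/-- For a pure singlet state `|ψ⟩ = ∑ᵢ tᵢ|i⟩ ∈ (ℂ^d)^{⊗n}`, for each value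
`k ∈ {0,…,d-1}` there is a number `N k` such that every multi-index `l` with
`t l ≠ 0` contains the value `k` exactly `N k` times; moreover `∑ₖ N k = n`. -/
theorem stmt_4 (d n : ℕ) (t : (Fin n → Fin d) → ℂ) (ht : t ≠ 0)
    (hsinglet : ∀ U ∈ Matrix.unitaryGroup (Fin d) ℂ, ∃ c : ℂ, tensorAction U t = c • t) :
    ∃ N : Fin d → ℕ,
      (∀ k : Fin d, ∀ l : Fin n → Fin d, t l ≠ 0 →
        (Finset.univ.filter fun α : Fin n => l α = k).card = N k) ∧
      ∑ k : Fin d, N k = n := by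
  obtain ⟨l₀, hl₀⟩ := Function.ne_iff.mp ht
  refine ⟨fun k => #{α | l₀ α = k},
    fun k l hl => card_filter_eq_of_eigenvector hsinglet k hl hl₀, ?_⟩
  rw [sum_card_filter_eq_card, Fintype.card_fin]
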